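/- arXiv:2110.03136 — 7 statements merged into one kernel-verified Lean document; each statement's English description precedes it below -/
import Mathlib

section
/- In a finite ultrametric space X, the cardinality of the spectrum spec(X) := {u(x,x') : x, x' ∈ X} is at most the cardinality of X. -/
open Finset

theorem ultra_aux {X : Type*} [DecidableEq X] (u : X → X → ℝ)
    (hsymm : ∀ x y, u x y = u y x)
    (hzero : ∀ x y, u x y = 0 ↔ x = y)
    (hultra : ∀ x y z, u x z ≤ max (u x y) (u y z)) :
    ∀ s : Finset X, s.Nonempty →
      ((s ×ˢ s).image fun p : X × X => u p.1 p.2).card ≤ s.card := by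
  have hnn : ∀ x y, 0 ≤ u x y := by
    intro x y
    have h := hultra x y x
    rw [(hzero x x).mpr rfl] at h
    rw [hsymm y x] at h
    simpa using h
  intro s
  induction s using Finset.strongInduction with
  | _ s ih =>
    intro hs
    set f : X × X → ℝ := fun p => u p.1 p.2 with hf
    have hne : ((s ×ˢ s).image f).Nonempty := (hs.product hs).image f
    set M := ((s ×ˢ s).image f).max' hne with hM
    rcases le_or_gt M 0 with hM0 | hMpos
    · -- all distances are 0
      have hsub : (s ×ˢ s).image f ⊆ {0} := by
        intro v hv
        simp only [mem_image, mem_product] at hv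
        obtain ⟨p, ⟨hp1, hp2⟩, rfl⟩ := hv
        have h1 : f p ≤ M := Finset.le_max' _ _ (mem_image_of_mem f (mem_product.mpr ⟨hp1, hp2⟩))
        have h2 : 0 ≤ f p := hnn _ _
        simp only [mem_singleton]
        linarith
      calc ((s ×ˢ s).image f).card ≤ 1 := by
            simpa using Finset.card_le_card hsub
        _ ≤ s.card := Finset.card_pos.mpr hs
    · -- M > 0
      obtain ⟨a, ha⟩ := hs
      set t := s.filter (fun x => u a x < M) with ht
      have hat : a ∈ t := by
        rw [ht, mem_filter]
        exact ⟨ha, by rw [(hzero a a).mpr rfl]; exact hMpos⟩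
      set t' := s \ t with ht'
      -- there is a pair realizing M; not both in t
      obtain ⟨p, hp, hpM⟩ := Finset.mem_image.mp (((s ×ˢ s).image f).max'_mem hne)
      rw [mem_product] at hp
      have ht'ne : t'.Nonempty := by
        by_contra h
        rw [Finset.not_nonempty_iff_eq_empty, ht', Finset.sdiff_eq_empty_iff_subset] at h
        have h1 : p.1 ∈ t := h hp.1
        have h2 : p.2 ∈ t := h hp.2
        rw [ht, mem_filter] at h1 h2
        have := hultra p.1 a p.2
        rw [hsymm p.1 a] at this
        have : f p < M := lt_of_le_of_lt this (max_lt h1.2 h2.2)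
        rw [hpM] at this
        exact lt_irrefl _ this
      -- cross distances equal M
      have hMax' : ∀ x ∈ s, ∀ y ∈ s, u x y ≤ M := fun x hx y hy =>
        Finset.le_max' _ (u x y)
          (Finset.mem_image.mpr ⟨(x, y), mem_product.mpr ⟨hx, hy⟩, rfl⟩)
      have hMax : ∀ x ∈ s, u a x ≤ M := fun x hx => hMax' a ha x hx
      have hcross : ∀ x ∈ t, ∀ y ∈ t', u x y = M := by
        intro x hx y hy
        rw [ht, mem_filter] at hx
        rw [ht', mem_sdiff, ht, mem_filter] at hy
        have hay : u a y = M := by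
          have h1 : ¬ u a y < M := fun h => hy.2 ⟨hy.1, h⟩
          exact le_antisymm (hMax y hy.1) (not_lt.mp h1)
        have hub : u x y ≤ M := hMax' x hx.1 y hy.1
        have hlb : M ≤ u x y := by
          have h := hultra a x y
          rw [hay] at h
          rcases max_cases (u a x) (u x y) with ⟨heq, _⟩ | ⟨heq, _⟩
          · rw [heq] at h; linarith [hx.2]
          · rw [heq] at h; exact h
        linarith
      -- internal distances in t are < M
      have hint : ∀ x ∈ t, ∀ y ∈ t, u x y < M := by
        intro x hx y hy
        rw [ht, mem_filter] at hx hy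
        have h := hultra x a y
        rw [hsymm x a] at h
        exact lt_of_le_of_lt h (max_lt hx.2 hy.2)
      set A := ((t ×ˢ t).image f) ∪ {M} with hA
      set B := ((t' ×ˢ t').image f) with hB
      have hsub : (s ×ˢ s).image f ⊆ A ∪ B := by
        intro v hv
        simp only [mem_image, mem_product] at hv
        obtain ⟨q, ⟨hq1, hq2⟩, rfl⟩ := hv
        by_cases h1 : q.1 ∈ t <;> by_cases h2 : q.2 ∈ t
        · exact mem_union_left _ (mem_union_left _
            (mem_image_of_mem f (mem_product.mpr ⟨h1, h2⟩)))
        · have : q.2 ∈ t' := by rw [ht', mem_sdiff]; exact ⟨hq2, h2⟩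
          rw [mem_union, hA, mem_union, mem_singleton]
          exact Or.inl (Or.inr (hcross q.1 h1 q.2 this))
        · have : q.1 ∈ t' := by rw [ht', mem_sdiff]; exact ⟨hq1, h1⟩
          rw [mem_union, hA, mem_union, mem_singleton]
          have := hcross q.2 h2 q.1 this
          rw [hsymm q.2 q.1] at this
          exact Or.inl (Or.inr this)
        · have e1 : q.1 ∈ t' := by rw [ht', mem_sdiff]; exact ⟨hq1, h1⟩
          have e2 : q.2 ∈ t' := by rw [ht', mem_sdiff]; exact ⟨hq2, h2⟩
          exact mem_union_right _ (mem_image_of_mem f (mem_product.mpr ⟨e1, e2⟩))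
      have h0A : (0 : ℝ) ∈ A := by
        rw [hA, mem_union]
        left
        have : f (a, a) = 0 := (hzero a a).mpr rfl
        rw [← this]
        exact mem_image_of_mem f (mem_product.mpr ⟨hat, hat⟩)
      have h0B : (0 : ℝ) ∈ B := by
        obtain ⟨b, hb⟩ := ht'ne
        have : f (b, b) = 0 := (hzero b b).mpr rfl
        rw [hB, ← this]
        exact mem_image_of_mem f (mem_product.mpr ⟨hb, hb⟩)
      have hsub2 : (s ×ˢ s).image f ⊆ A ∪ (B.erase 0) := by
        intro v hv
        rcases mem_union.mp (hsub hv) with h | h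
        · exact mem_union_left _ h
        · by_cases hv0 : v = 0
          · exact mem_union_left _ (hv0 ▸ h0A)
          · exact mem_union_right _ (mem_erase.mpr ⟨hv0, h⟩)
      -- IH applications
      have htsub : t ⊆ s := ht ▸ Finset.filter_subset _ _
      have htss : t ⊂ s := by
        refine ⟨htsub, fun hcon => ?_⟩
        obtain ⟨b, hb⟩ := ht'ne
        rw [ht', mem_sdiff] at hb
        exact hb.2 (hcon hb.1)
      have ht'sub : t' ⊆ s := ht' ▸ Finset.sdiff_subset
      have ht'ss : t' ⊂ s := by
        refine ⟨ht'sub, fun hcon => ?_⟩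
        have := hcon ha
        rw [ht', mem_sdiff] at this
        exact this.2 hat
      have ihA : ((t ×ˢ t).image f).card ≤ t.card := ih t htss ⟨a, hat⟩
      have ihB : B.card ≤ t'.card := ih t' ht'ss ht'ne
      have hBpos : 1 ≤ B.card := Finset.card_pos.mpr ⟨0, h0B⟩
      have hcardA : A.card ≤ t.card + 1 :=
        le_trans (Finset.card_union_le _ _) (by simpa using ihA)
      have hcardBe : (B.erase 0).card ≤ t'.card - 1 := by
        rw [Finset.card_erase_of_mem h0B]
        omega
      have hts : t.card + t'.card = s.card := by
        have hle : t.card ≤ s.card := Finset.card_le_card htsub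
        rw [ht', Finset.card_sdiff_of_subset htsub]
        omega
      calc ((s ×ˢ s).image f).card ≤ (A ∪ B.erase 0).card := Finset.card_le_card hsub2
        _ ≤ A.card + (B.erase 0).card := Finset.card_union_le _ _
        _ ≤ (t.card + 1) + (t'.card - 1) := by omega
        _ ≤ s.card := by omega

/-- In a finite ultrametric space, the cardinality of the spectrum is at most the
cardinality of the space. -/
theorem ultrametric_spectrum_card {X : Type*} [Fintype X] (u : X → X → ℝ)
    (hsymm : ∀ x y, u x y = u y x)
    (hzero : ∀ x y, u x y = 0 ↔ x = y)
    (hultra : ∀ x y z, u x z ≤ max (u x y) (u y z)) :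
    (Set.range fun p : X × X => u p.1 p.2).ncard ≤ Fintype.card X := by
  classical
  cases isEmpty_or_nonempty X with
  | inl h =>
    have : (Set.range fun p : X × X => u p.1 p.2) = ∅ := by
      rw [Set.range_eq_empty_iff]; infer_instance
    simp [this]
  | inr h =>
    have key := ultra_aux u hsymm hzero hultra Finset.univ Finset.univ_nonempty
    have heq : (Set.range fun p : X × X => u p.1 p.2) =
        ↑((Finset.univ ×ˢ Finset.univ).image fun p : X × X => u p.1 p.2) := by
      ext v
      simp [Set.mem_range]
    rw [heq, Set.ncard_coe_finset]
    simpa [Finset.card_univ] using key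
end

section
/- Let X and Y be finite ultrametric spaces, t ≥ 0, and suppose the t-closed quotients X_{c(t)} and Y_{c(t)} are isometric via f. Then R_t := {(x,y) ∈ X × Y : [y]_{c(t)} = f([x]_{c(t)})} is a correspondence between X and Y with dis_∞(R_t) ≤ t, where dis_∞(R) := sup over (x,y),(x',y') ∈ R of Λ_∞(u_X(x,x'), u_Y(y,y')). -/
/-- Absolute `∞`-difference. -/
noncomputable def lambdaInfty (a b : ℝ) : ℝ := if a = b then 0 else max a b

private lemma quot_eq_imp {Z : Type*} (u : Z → Z → ℝ) (t : ℝ) (ht : 0 ≤ t)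
    (hzero : ∀ x y, u x y = 0 ↔ x = y)
    (hsymm : ∀ x y, u x y = u y x)
    (hultra : ∀ x y z, u x z ≤ max (u x y) (u y z))
    {a b : Z} (h : Quot.mk (fun a b : Z => u a b ≤ t) a = Quot.mk (fun a b : Z => u a b ≤ t) b) :
    u a b ≤ t := by
  have h' := Quot.eqvGen_exact h
  clear h
  induction h' with
  | rel x y h => exact h
  | refl x => rw [(hzero x x).mpr rfl]; exact ht
  | symm x y _ ih => rw [hsymm]; exact ih
  | trans x y z _ _ ih1 ih2 => exact (hultra x y z).trans (max_le ih1 ih2)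

/-- If the `t`-closed quotients of two finite ultrametric spaces are isometric via `f`,
then `R_t := {(x,y) : [y] = f [x]}` is a correspondence with `dis_∞(R_t) ≤ t`. -/
theorem corr_of_quotient_isometry {X Y : Type*} [Fintype X] [Fintype Y]
    (uX : X → X → ℝ) (uY : Y → Y → ℝ)
    (hXsymm : ∀ x y, uX x y = uX y x)
    (hXzero : ∀ x y, uX x y = 0 ↔ x = y)
    (hXultra : ∀ x y z, uX x z ≤ max (uX x y) (uX y z))
    (hYsymm : ∀ x y, uY x y = uY y x)
    (hYzero : ∀ x y, uY x y = 0 ↔ x = y)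
    (hYultra : ∀ x y z, uY x z ≤ max (uY x y) (uY y z))
    (t : ℝ) (ht : 0 ≤ t)
    (f : Quot (fun a b : X => uX a b ≤ t) → Quot (fun a b : Y => uY a b ≤ t))
    (hbij : Function.Bijective f)
    (hiso : ∀ (x x' : X) (y y' : Y),
      f (Quot.mk (fun a b : X => uX a b ≤ t) x) = Quot.mk (fun a b : Y => uY a b ≤ t) y →
      f (Quot.mk (fun a b : X => uX a b ≤ t) x') = Quot.mk (fun a b : Y => uY a b ≤ t) y' →
      ((Quot.mk (fun a b : X => uX a b ≤ t) x = Quot.mk (fun a b : X => uX a b ≤ t) x' ↔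
          Quot.mk (fun a b : Y => uY a b ≤ t) y = Quot.mk (fun a b : Y => uY a b ≤ t) y') ∧
        (Quot.mk (fun a b : X => uX a b ≤ t) x ≠ Quot.mk (fun a b : X => uX a b ≤ t) x' →
          uY y y' = uX x x'))) :
    ((∀ x : X, ∃ y : Y,
        (x, y) ∈ {p : X × Y |
          Quot.mk (fun a b : Y => uY a b ≤ t) p.2 = f (Quot.mk (fun a b : X => uX a b ≤ t) p.1)}) ∧
      (∀ y : Y, ∃ x : X,
        (x, y) ∈ {p : X × Y |
          Quot.mk (fun a b : Y => uY a b ≤ t) p.2 = f (Quot.mk (fun a b : X => uX a b ≤ t) p.1)})) ∧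
    ∀ p ∈ {p : X × Y |
        Quot.mk (fun a b : Y => uY a b ≤ t) p.2 = f (Quot.mk (fun a b : X => uX a b ≤ t) p.1)},
      ∀ q ∈ {p : X × Y |
        Quot.mk (fun a b : Y => uY a b ≤ t) p.2 = f (Quot.mk (fun a b : X => uX a b ≤ t) p.1)},
      lambdaInfty (uX p.1 q.1) (uY p.2 q.2) ≤ t := by
  refine ⟨⟨fun x => ?_, fun y => ?_⟩, ?_⟩
  · obtain ⟨y, hy⟩ := Quot.exists_rep (f (Quot.mk _ x))
    exact ⟨y, hy⟩
  · obtain ⟨q, hq⟩ := hbij.2 (Quot.mk _ y)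
    obtain ⟨x, hx⟩ := Quot.exists_rep q
    exact ⟨x, by simp only [Set.mem_setOf_eq, hx, hq]⟩
  · rintro ⟨x, y⟩ hp ⟨x', y'⟩ hq
    simp only [Set.mem_setOf_eq] at hp hq
    obtain ⟨hiff, hne⟩ := hiso x x' y y' hp.symm hq.symm
    unfold lambdaInfty
    split
    · exact ht
    · by_cases hxx : Quot.mk (fun a b : X => uX a b ≤ t) x = Quot.mk (fun a b : X => uX a b ≤ t) x'
      · have h1 := quot_eq_imp uX t ht hXzero hXsymm hXultra hxx
        have h2 := quot_eq_imp uY t ht hYzero hYsymm hYultra (hiff.mp hxx)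
        exact max_le h1 h2
      · exact absurd (hne hxx).symm (by assumption)
end

section
/- Let X and Y be finite ultrametric spaces and let R be a correspondence between them with dis_∞(R) = t. Then the map f_t : X_{c(t)} → Y_{c(t)} sending [x]_{c(t)} to [y]_{c(t)} for any y with (x,y) ∈ R is a well-defined isometry between the t-closed quotients. -/
/-- From a correspondence `R` with `dis_∞(R) = t`, the induced map between the
`t`-closed quotients is a well-defined isometry. -/
theorem quotient_isometry_of_corr {X Y : Type*} [Fintype X] [Fintype Y]
    (uX : X → X → ℝ) (uY : Y → Y → ℝ)
    (hXsymm : ∀ x y, uX x y = uX y x)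
    (hXzero : ∀ x y, uX x y = 0 ↔ x = y)
    (hXultra : ∀ x y z, uX x z ≤ max (uX x y) (uX y z))
    (hYsymm : ∀ x y, uY x y = uY y x)
    (hYzero : ∀ x y, uY x y = 0 ↔ x = y)
    (hYultra : ∀ x y z, uY x z ≤ max (uY x y) (uY y z))
    (R : Set (X × Y))
    (hcorr : (∀ x, ∃ y, (x, y) ∈ R) ∧ (∀ y, ∃ x, (x, y) ∈ R))
    (t : ℝ)
    (hdis : sSup {d : ℝ | ∃ p ∈ R, ∃ q ∈ R, d = lambdaInfty (uX p.1 q.1) (uY p.2 q.2)} = t) :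
    ∃ f : Quot (fun a b : X => uX a b ≤ t) → Quot (fun a b : Y => uY a b ≤ t),
      (∀ (x : X) (y : Y), (x, y) ∈ R →
        f (Quot.mk (fun a b : X => uX a b ≤ t) x) = Quot.mk (fun a b : Y => uY a b ≤ t) y) ∧
      Function.Bijective f ∧
      ∀ (x x' : X) (y y' : Y),
        f (Quot.mk (fun a b : X => uX a b ≤ t) x) = Quot.mk (fun a b : Y => uY a b ≤ t) y →
        f (Quot.mk (fun a b : X => uX a b ≤ t) x') = Quot.mk (fun a b : Y => uY a b ≤ t) y' →
        ((Quot.mk (fun a b : X => uX a b ≤ t) x = Quot.mk (fun a b : X => uX a b ≤ t) x' ↔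
            Quot.mk (fun a b : Y => uY a b ≤ t) y = Quot.mk (fun a b : Y => uY a b ≤ t) y') ∧
          (Quot.mk (fun a b : X => uX a b ≤ t) x ≠ Quot.mk (fun a b : X => uX a b ≤ t) x' →
            uY y y' = uX x x')) := by

  classical
  obtain ⟨h1, h2⟩ := hcorr
  by_cases hX : Nonempty X
  · -- main case
    set S := {d : ℝ | ∃ p ∈ R, ∃ q ∈ R, d = lambdaInfty (uX p.1 q.1) (uY p.2 q.2)} with hS
    have hSfin : S.Finite := by
      have hsub : S ⊆ Set.range (fun pq : (X × Y) × (X × Y) =>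
          lambdaInfty (uX pq.1.1 pq.2.1) (uY pq.1.2 pq.2.2)) := by
        rintro d ⟨p, hp, q, hq, rfl⟩; exact ⟨(p, q), rfl⟩
      exact (Set.finite_range _).subset hsub
    have hbdd : BddAbove S := hSfin.bddAbove
    have hle : ∀ p ∈ R, ∀ q ∈ R, lambdaInfty (uX p.1 q.1) (uY p.2 q.2) ≤ t := by
      intro p hp q hq
      rw [← hdis]
      exact le_csSup hbdd ⟨p, hp, q, hq, rfl⟩
    obtain ⟨x0⟩ := hX
    obtain ⟨y0, hy0⟩ := h1 x0
    have ht0 : (0 : ℝ) ≤ t := by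
      have h := hle (x0, y0) hy0 (x0, y0) hy0
      have e : lambdaInfty (uX x0 x0) (uY y0 y0) = 0 := by
        simp [lambdaInfty, (hXzero x0 x0).mpr rfl, (hYzero y0 y0).mpr rfl]
      linarith [e ▸ h]
    have key : ∀ x y x' y', (x, y) ∈ R → (x', y') ∈ R →
        (uX x x' ≤ t ↔ uY y y' ≤ t) ∧ (¬ uX x x' ≤ t → uY y y' = uX x x') := by
      intro x y x' y' h h'
      have hl := hle (x, y) h (x', y') h'
      simp only [lambdaInfty] at hl
      by_cases he : uX x x' = uY y y'
      · rw [if_pos he] at hl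
        exact ⟨by rw [he], fun _ => he.symm⟩
      · rw [if_neg he] at hl
        refine ⟨⟨fun _ => le_trans (le_max_right _ _) hl,
          fun _ => le_trans (le_max_left _ _) hl⟩, ?_⟩
        intro hn; exact absurd (le_trans (le_max_left _ _) hl) hn
    have eqX : Equivalence (fun a b : X => uX a b ≤ t) :=
      ⟨fun a => by rw [(hXzero a a).mpr rfl]; exact ht0,
       fun {a b} h => by rw [hXsymm]; exact h,
       fun {a b c} hab hbc => le_trans (hXultra a b c) (max_le hab hbc)⟩
    have eqY : Equivalence (fun a b : Y => uY a b ≤ t) :=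
      ⟨fun a => by rw [(hYzero a a).mpr rfl]; exact ht0,
       fun {a b} h => by rw [hYsymm]; exact h,
       fun {a b c} hab hbc => le_trans (hYultra a b c) (max_le hab hbc)⟩
    have quotX : ∀ a b : X,
        Quot.mk (fun a b : X => uX a b ≤ t) a = Quot.mk (fun a b : X => uX a b ≤ t) b ↔
          uX a b ≤ t := by
      intro a b; rw [Quot.eq]; exact ⟨fun h => eqX.eqvGen_iff.mp h, fun h => Relation.EqvGen.rel _ _ h⟩
    have quotY : ∀ a b : Y,
        Quot.mk (fun a b : Y => uY a b ≤ t) a = Quot.mk (fun a b : Y => uY a b ≤ t) b ↔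
          uY a b ≤ t := by
      intro a b; rw [Quot.eq]; exact ⟨fun h => eqY.eqvGen_iff.mp h, fun h => Relation.EqvGen.rel _ _ h⟩
    set c : X → Y := fun x => (h1 x).choose with hc
    have hcR : ∀ x, (x, c x) ∈ R := fun x => (h1 x).choose_spec
    refine ⟨Quot.lift (fun x => Quot.mk (fun a b : Y => uY a b ≤ t) (c x))
      (fun a b hab => Quot.sound ((key a (c a) b (c b) (hcR a) (hcR b)).1.mp hab)), ?_, ?_, ?_⟩
    · -- agrees with R
      intro x y hxy
      exact Quot.sound ((key x (c x) x y (hcR x) hxy).1.mp (eqX.refl x))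
    · constructor
      · -- injective
        intro a b
        induction a using Quot.ind with | _ a =>
        induction b using Quot.ind with | _ b =>
        intro hab
        have : uY (c a) (c b) ≤ t := (quotY _ _).mp hab
        exact Quot.sound ((key a (c a) b (c b) (hcR a) (hcR b)).1.mpr this)
      · -- surjective
        intro q
        induction q using Quot.ind with | _ y =>
        obtain ⟨x, hx⟩ := h2 y
        exact ⟨Quot.mk _ x, Quot.sound ((key x (c x) x y (hcR x) hx).1.mp (eqX.refl x))⟩
    · -- isometry
      intro x x' y y' hxy hxy'
      have d1 : uY (c x) y ≤ t := (quotY _ _).mp hxy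
      have d2 : uY (c x') y' ≤ t := (quotY _ _).mp hxy'
      have kk := key x (c x) x' (c x') (hcR x) (hcR x')
      constructor
      · rw [quotX, quotY]
        constructor
        · intro hxx
          have hab : uY (c x) (c x') ≤ t := kk.1.mp hxx
          have s1 : uY y (c x) ≤ t := by rw [hYsymm]; exact d1
          have : uY y (c x') ≤ t := le_trans (hYultra y (c x) (c x')) (max_le s1 hab)
          exact le_trans (hYultra y (c x') y') (max_le this d2)
        · intro hyy
          have s2 : uY y' (c x') ≤ t := by rw [hYsymm]; exact d2
          have : uY y (c x') ≤ t := le_trans (hYultra y y' (c x')) (max_le hyy s2)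
          have hab : uY (c x) (c x') ≤ t := le_trans (hYultra (c x) y (c x')) (max_le d1 this)
          exact kk.1.mpr hab
      · intro hne
        have hxx : ¬ uX x x' ≤ t := fun h => hne ((quotX x x').mpr h)
        have hab : uY (c x) (c x') = uX x x' := kk.2 hxx
        have htab : t < uY (c x) (c x') := by
          rw [hab]; exact lt_of_not_ge hxx
        set a := c x
        set b := c x'
        -- uY y y' = uY a b
        have s1 : uY y a ≤ t := by rw [hYsymm]; exact d1
        have s2 : uY y' b ≤ t := by rw [hYsymm]; exact d2
        have upper : uY y y' ≤ uY a b := by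
          have h2' : uY a y' ≤ uY a b :=
            le_trans (hYultra a b y') (max_le le_rfl (le_trans d2 htab.le))
          exact le_trans (hYultra y a y') (max_le (le_trans s1 htab.le) h2')
        have lower : uY a b ≤ uY y y' := by
          have step1 : uY a b ≤ uY y b := by
            have h3 := hYultra a y b
            rcases max_cases (uY a y) (uY y b) with ⟨he, _⟩ | ⟨he, _⟩
            · exfalso; rw [he] at h3
              have : uY a y ≤ t := d1
              linarith
            · rw [he] at h3; exact h3
          have step2 : uY y b ≤ uY y y' := by
            have h4 := hYultra y y' b
            rcases max_cases (uY y y') (uY y' b) with ⟨he, _⟩ | ⟨he, _⟩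
            · rw [he] at h4; exact h4
            · exfalso; rw [he] at h4
              have : uY a b ≤ t := le_trans (le_trans step1 h4) s2
              linarith
          exact le_trans step1 step2
        rw [← hab]; exact le_antisymm upper lower
  · -- X empty
    have hXe : IsEmpty X := not_nonempty_iff.mp hX
    have hYe : IsEmpty Y := ⟨fun y => hXe.elim (h2 y).choose⟩
    have hQX : IsEmpty (Quot (fun a b : X => uX a b ≤ t)) :=
      ⟨fun q => Quot.ind (β := fun _ => False) (fun x => isEmptyElim x) q⟩
    have hQY : IsEmpty (Quot (fun a b : Y => uY a b ≤ t)) :=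
      ⟨fun q => Quot.ind (β := fun _ => False) (fun y => isEmptyElim y) q⟩
    refine ⟨fun q => isEmptyElim q, fun x => isEmptyElim x,
      ⟨fun a b _ => isEmptyElim a, fun b => isEmptyElim b⟩, fun x => isEmptyElim x⟩
end

section
/- For finite ultrametric spaces X and Y, the Gromov–Hausdorff ultrametric u_GH(X,Y) := inf over correspondences R of dis_∞(R) equals the minimum t ≥ 0 such that the t-closed quotients X_{c(t)} and Y_{c(t)} are isometric. -/
/-- A correspondence between two sets. -/
def IsCorrespondence {X Y : Type*} (R : Set (X × Y)) : Prop :=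
  (∀ x, ∃ y, (x, y) ∈ R) ∧ (∀ y, ∃ x, (x, y) ∈ R)

/-- `dis_∞` of a subset of a product of ultrametric spaces. -/
noncomputable def disInfty {X Y : Type*} (uX : X → X → ℝ) (uY : Y → Y → ℝ)
    (R : Set (X × Y)) : ℝ :=
  sSup {d : ℝ | ∃ p ∈ R, ∃ q ∈ R, d = lambdaInfty (uX p.1 q.1) (uY p.2 q.2)}

/-- The Gromov–Hausdorff ultrametric between ultrametric spaces. -/
noncomputable def uGH {X Y : Type*} (uX : X → X → ℝ) (uY : Y → Y → ℝ) : ℝ :=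
  sInf {d : ℝ | ∃ R : Set (X × Y), IsCorrespondence R ∧ d = disInfty uX uY R}

lemma lambdaInfty_self (a : ℝ) : lambdaInfty a a = 0 := if_pos rfl

lemma lambdaInfty_le {a b t : ℝ} (ht : 0 ≤ t) (ha : a ≤ t) (hb : b ≤ t) :
    lambdaInfty a b ≤ t := by
  unfold lambdaInfty; split_ifs with h
  · exact ht
  · exact max_le ha hb

lemma le_of_lambdaInfty_le {a b t : ℝ} (h : lambdaInfty a b ≤ t) (ha : a ≤ t) : b ≤ t := by
  unfold lambdaInfty at h; split_ifs at h with hab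
  · exact hab ▸ ha
  · exact (le_max_right a b).trans h

lemma eq_of_lambdaInfty_le {a b t : ℝ} (h : lambdaInfty a b ≤ t) (ha : t < a) : b = a := by
  unfold lambdaInfty at h; split_ifs at h with hab
  · exact hab.symm
  · exact absurd ((le_max_left a b).trans h) (not_le.mpr ha)

lemma pert_lemma {Z : Type*} (u : Z → Z → ℝ)
    (hsymm : ∀ x y, u x y = u y x)
    (hultra : ∀ x y z, u x z ≤ max (u x y) (u y z))
    {t : ℝ} {a a' b : Z} (h1 : u a a' ≤ t) (h2 : t < u a b) :
    u a' b = u a b := by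
  have le1 : u a' b ≤ u a b := by
    have h3 := hultra a' a b
    rw [hsymm a' a] at h3
    exact h3.trans (max_le (h1.trans h2.le) le_rfl)
  have le2 : u a b ≤ u a' b := by
    have h3 := hultra a a' b
    rcases le_max_iff.mp h3 with h | h
    · linarith
    · exact h
  linarith

lemma quot_mk_eq_iff {Z : Type*} {r : Z → Z → Prop} (h : Equivalence r) {a b : Z} :
    Quot.mk r a = Quot.mk r b ↔ r a b :=
  ⟨fun hab => (Equivalence.eqvGen_iff h).mp (Quot.eq.mp hab), Quot.sound⟩

/-- Structural theorem for `u_GH`: it is the least `t ≥ 0` such that the `t`-closed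
quotients are isometric. -/
theorem uGH_structural {X Y : Type*} [Fintype X] [Fintype Y] [Nonempty X] [Nonempty Y]
    (uX : X → X → ℝ) (uY : Y → Y → ℝ)
    (hXsymm : ∀ x y, uX x y = uX y x)
    (hXzero : ∀ x y, uX x y = 0 ↔ x = y)
    (hXultra : ∀ x y z, uX x z ≤ max (uX x y) (uX y z))
    (hYsymm : ∀ x y, uY x y = uY y x)
    (hYzero : ∀ x y, uY x y = 0 ↔ x = y)
    (hYultra : ∀ x y z, uY x z ≤ max (uY x y) (uY y z)) :
    IsLeast {t : ℝ | 0 ≤ t ∧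
      ∃ f : Quot (fun a b : X => uX a b ≤ t) → Quot (fun a b : Y => uY a b ≤ t),
        Function.Bijective f ∧
        ∀ (x x' : X) (y y' : Y),
          f (Quot.mk (fun a b : X => uX a b ≤ t) x) = Quot.mk (fun a b : Y => uY a b ≤ t) y →
          f (Quot.mk (fun a b : X => uX a b ≤ t) x') = Quot.mk (fun a b : Y => uY a b ≤ t) y' →
          ((Quot.mk (fun a b : X => uX a b ≤ t) x = Quot.mk (fun a b : X => uX a b ≤ t) x' ↔
              Quot.mk (fun a b : Y => uY a b ≤ t) y = Quot.mk (fun a b : Y => uY a b ≤ t) y') ∧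
            (Quot.mk (fun a b : X => uX a b ≤ t) x ≠ Quot.mk (fun a b : X => uX a b ≤ t) x' →
              uY y y' = uX x x'))}
      (uGH uX uY) := by
  classical
  have hSR : ∀ R : Set (X × Y), IsCorrespondence R →
      (0 ≤ disInfty uX uY R ∧ ∀ p ∈ R, ∀ q ∈ R,
        lambdaInfty (uX p.1 q.1) (uY p.2 q.2) ≤ disInfty uX uY R) := by
    intro R hR
    obtain ⟨x0⟩ := ‹Nonempty X›
    obtain ⟨y0, hy0⟩ := hR.1 x0
    have hSsub : {d : ℝ | ∃ p ∈ R, ∃ q ∈ R, d = lambdaInfty (uX p.1 q.1) (uY p.2 q.2)} ⊆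
        Set.range (fun pq : (X × Y) × (X × Y) =>
          lambdaInfty (uX pq.1.1 pq.2.1) (uY pq.1.2 pq.2.2)) := by
      rintro d ⟨p, hp, q, hq, rfl⟩
      exact ⟨(p, q), rfl⟩
    have hbdd : BddAbove {d : ℝ | ∃ p ∈ R, ∃ q ∈ R,
        d = lambdaInfty (uX p.1 q.1) (uY p.2 q.2)} :=
      ((Set.finite_range _).subset hSsub).bddAbove
    have h0 : (0 : ℝ) ∈ {d : ℝ | ∃ p ∈ R, ∃ q ∈ R,
        d = lambdaInfty (uX p.1 q.1) (uY p.2 q.2)} := by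
      refine ⟨(x0, y0), hy0, (x0, y0), hy0, ?_⟩
      rw [(hXzero x0 x0).mpr rfl, (hYzero y0 y0).mpr rfl, lambdaInfty_self]
    exact ⟨le_csSup hbdd h0, fun p hp q hq => le_csSup hbdd ⟨p, hp, q, hq, rfl⟩⟩
  set D := {d : ℝ | ∃ R : Set (X × Y), IsCorrespondence R ∧ d = disInfty uX uY R} with hD
  have hDmemUniv : disInfty uX uY (Set.univ : Set (X × Y)) ∈ D := by
    refine ⟨Set.univ, ⟨?_, ?_⟩, rfl⟩
    · intro x; obtain ⟨y0⟩ := ‹Nonempty Y›; exact ⟨y0, trivial⟩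
    · intro y; obtain ⟨x0⟩ := ‹Nonempty X›; exact ⟨x0, trivial⟩
  have hDne : D.Nonempty := ⟨_, hDmemUniv⟩
  have hDbdd : BddBelow D := ⟨0, by rintro d ⟨R, hR, rfl⟩; exact (hSR R hR).1⟩
  have hDfin : D.Finite := by
    have hsub : D ⊆ Set.range (disInfty uX uY) := by rintro d ⟨R, _, rfl⟩; exact ⟨R, rfl⟩
    exact (Set.finite_range _).subset hsub
  have htmem : uGH uX uY ∈ D := hDne.csInf_mem hDfin
  set t0 := uGH uX uY with ht0def
  obtain ⟨R, hR, ht0⟩ := htmem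
  have h0t0 : 0 ≤ t0 := ht0 ▸ (hSR R hR).1
  have hd : ∀ p ∈ R, ∀ q ∈ R, lambdaInfty (uX p.1 q.1) (uY p.2 q.2) ≤ t0 := by
    intro p hp q hq; rw [ht0]; exact (hSR R hR).2 p hp q hq
  have eqX : ∀ t : ℝ, 0 ≤ t → Equivalence (fun a b : X => uX a b ≤ t) := by
    intro t ht
    refine ⟨fun a => ?_, fun {a b} h => ?_, fun {a b c} h1 h2 => ?_⟩
    · show uX a a ≤ t; rw [(hXzero a a).mpr rfl]; exact ht
    · show uX _ _ ≤ t; rw [hXsymm]; exact h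
    · exact (hXultra a b c).trans (max_le h1 h2)
  have eqY : ∀ t : ℝ, 0 ≤ t → Equivalence (fun a b : Y => uY a b ≤ t) := by
    intro t ht
    refine ⟨fun a => ?_, fun {a b} h => ?_, fun {a b c} h1 h2 => ?_⟩
    · show uY a a ≤ t; rw [(hYzero a a).mpr rfl]; exact ht
    · show uY _ _ ≤ t; rw [hYsymm]; exact h
    · exact (hYultra a b c).trans (max_le h1 h2)
  choose yc hyc using hR.1
  choose xc hxc using hR.2
  have hA : ∀ (x x' : X) (y y' : Y), (x, y) ∈ R → (x', y') ∈ R →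
      uX x x' ≤ t0 → uY y y' ≤ t0 := by
    intro x x' y y' h h' hle
    exact le_of_lambdaInfty_le (hd (x, y) h (x', y') h') hle
  have hA' : ∀ (x x' : X) (y y' : Y), (x, y) ∈ R → (x', y') ∈ R →
      uY y y' ≤ t0 → uX x x' ≤ t0 := by
    intro x x' y y' h h' hle
    by_contra hgt
    push_neg at hgt
    have heq := eq_of_lambdaInfty_le (hd (x, y) h (x', y') h') hgt
    rw [heq] at hle
    exact absurd hle (not_le.mpr hgt)
  have hB : ∀ (x x' : X) (y y' : Y), (x, y) ∈ R → (x', y') ∈ R →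
      t0 < uX x x' → uY y y' = uX x x' :=
    fun x x' y y' h h' hgt => eq_of_lambdaInfty_le (hd (x, y) h (x', y') h') hgt
  constructor
  · -- membership
    refine ⟨h0t0, ?_⟩
    have eX := eqX t0 h0t0
    have eY := eqY t0 h0t0
    refine ⟨Quot.lift (fun x => Quot.mk (fun a b : Y => uY a b ≤ t0) (yc x))
      (fun a b hab => Quot.sound (hA a b (yc a) (yc b) (hyc a) (hyc b) hab)), ?_, ?_⟩
    · -- bijective
      refine Function.bijective_iff_has_inverse.mpr
        ⟨Quot.lift (fun y => Quot.mk (fun a b : X => uX a b ≤ t0) (xc y))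
          (fun a b hab => Quot.sound (hA' (xc a) (xc b) a b (hxc a) (hxc b) hab)), ?_, ?_⟩
      · intro q
        induction q using Quot.ind with
        | _ x =>
          apply Quot.sound
          show uX (xc (yc x)) x ≤ t0
          exact hA' (xc (yc x)) x (yc x) (yc x) (hxc (yc x)) (hyc x)
            (by rw [(hYzero _ _).mpr rfl]; exact h0t0)
      · intro q
        induction q using Quot.ind with
        | _ y =>
          apply Quot.sound
          show uY (yc (xc y)) y ≤ t0
          exact hA (xc y) (xc y) (yc (xc y)) y (hyc (xc y)) (hxc y)
            (by rw [(hXzero _ _).mpr rfl]; exact h0t0)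
    · -- the structural property
      intro x x' y y' hfy hfy'
      have h1 : uY (yc x) y ≤ t0 := (quot_mk_eq_iff eY).mp hfy
      have h1' : uY (yc x') y' ≤ t0 := (quot_mk_eq_iff eY).mp hfy'
      constructor
      · constructor
        · intro h
          have hyy : uY (yc x) (yc x') ≤ t0 :=
            hA x x' (yc x) (yc x') (hyc x) (hyc x') ((quot_mk_eq_iff eX).mp h)
          apply (quot_mk_eq_iff eY).mpr
          show uY y y' ≤ t0
          have hs : uY y (yc x) ≤ t0 := by rw [hYsymm]; exact h1
          have step1 : uY y (yc x') ≤ t0 := (hYultra y (yc x) (yc x')).trans (max_le hs hyy)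
          exact (hYultra y (yc x') y').trans (max_le step1 h1')
        · intro h
          have hyy' : uY y y' ≤ t0 := (quot_mk_eq_iff eY).mp h
          apply (quot_mk_eq_iff eX).mpr
          show uX x x' ≤ t0
          have s1 : uY (yc x) y' ≤ t0 := (hYultra (yc x) y y').trans (max_le h1 hyy')
          have s2 : uY (yc x) (yc x') ≤ t0 := by
            refine (hYultra (yc x) y' (yc x')).trans (max_le s1 ?_)
            rw [hYsymm]; exact h1'
          exact hA' x x' (yc x) (yc x') (hyc x) (hyc x') s2
      · intro hne
        have hxx' : t0 < uX x x' := by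
          by_contra hle
          push_neg at hle
          exact hne (Quot.sound hle)
        have hb : uY (yc x) (yc x') = uX x x' :=
          hB x x' (yc x) (yc x') (hyc x) (hyc x') hxx'
        have hb' : t0 < uY (yc x) (yc x') := by rw [hb]; exact hxx'
        have s1 : uY y (yc x') = uY (yc x) (yc x') := pert_lemma uY hYsymm hYultra h1 hb'
        have hb'' : t0 < uY (yc x') y := by rw [hYsymm (yc x') y, s1]; exact hb'
        have s2 : uY y' y = uY (yc x') y := pert_lemma uY hYsymm hYultra h1' hb''
        rw [hYsymm y y', s2, hYsymm (yc x') y, s1, hb]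
  · -- lower bound
    rintro t ⟨ht, f, hbij, hprop⟩
    have eX := eqX t ht
    have eY := eqY t ht
    set R' : Set (X × Y) :=
      {p | f (Quot.mk (fun a b : X => uX a b ≤ t) p.1) =
        Quot.mk (fun a b : Y => uY a b ≤ t) p.2} with hR'
    have hcorr : IsCorrespondence R' := by
      constructor
      · intro x
        obtain ⟨y, hy⟩ := Quot.exists_rep (f (Quot.mk (fun a b : X => uX a b ≤ t) x))
        exact ⟨y, hy.symm⟩
      · intro y
        obtain ⟨c, hc⟩ := hbij.2 (Quot.mk (fun a b : Y => uY a b ≤ t) y)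
        obtain ⟨x, hx⟩ := Quot.exists_rep c
        refine ⟨x, ?_⟩
        show f _ = _
        rw [hx]; exact hc
    have hdis : disInfty uX uY R' ≤ t := by
      apply csSup_le
      · obtain ⟨x0⟩ := ‹Nonempty X›
        obtain ⟨y0, hy0⟩ := hcorr.1 x0
        exact ⟨_, ⟨(x0, y0), hy0, (x0, y0), hy0, rfl⟩⟩
      · rintro d ⟨⟨x, y⟩, hp, ⟨x', y'⟩, hq, rfl⟩
        obtain ⟨hiff, hne⟩ := hprop x x' y y' hp hq
        by_cases hxx : Quot.mk (fun a b : X => uX a b ≤ t) x =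
            Quot.mk (fun a b : X => uX a b ≤ t) x'
        · have hyy := hiff.mp hxx
          exact lambdaInfty_le ht ((quot_mk_eq_iff eX).mp hxx) ((quot_mk_eq_iff eY).mp hyy)
        · show lambdaInfty (uX x x') (uY y y') ≤ t
          rw [hne hxx, lambdaInfty_self]
          exact ht
    calc t0 ≤ disInfty uX uY R' := csInf_le hDbdd ⟨R', hcorr, rfl⟩
      _ ≤ t := hdis
end

section
/- The quantity u_GH(X,Y) := inf over correspondences R of dis_∞(R) defines an ultrametric (up to isometry) on the collection of finite ultrametric spaces; in particular it satisfies the strong triangle inequality u_GH(X,Z) ≤ max(u_GH(X,Y), u_GH(Y,Z)). -/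
lemma lambdaInfty_nonneg {a b : ℝ} (ha : 0 ≤ a) : 0 ≤ lambdaInfty a b := by
  unfold lambdaInfty
  split_ifs with h
  · exact le_refl 0
  · exact le_trans ha (le_max_left _ _)

lemma lambdaInfty_ultra {a b c : ℝ} (ha : 0 ≤ a) (hb : 0 ≤ b) (hc : 0 ≤ c) :
    lambdaInfty a c ≤ max (lambdaInfty a b) (lambdaInfty b c) := by
  unfold lambdaInfty
  split_ifs with hac hab hbc <;>
    first
    | positivity
    | simp_all [max_le_iff, le_max_iff, le_total]
  all_goals
    rcases le_total a c with h | h <;> rcases le_total a b with h2 | h2 <;>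
      rcases le_total b c with h3 | h3 <;> simp_all

/-- the set of dis values of a subset is finite -/
lemma disSet_finite {X Y : Type*} [Finite X] [Finite Y]
    (uX : X → X → ℝ) (uY : Y → Y → ℝ) (R : Set (X × Y)) :
    {d : ℝ | ∃ p ∈ R, ∃ q ∈ R, d = lambdaInfty (uX p.1 q.1) (uY p.2 q.2)}.Finite := by
  apply Set.Finite.subset (Set.finite_range
    (fun pq : (X × Y) × (X × Y) => lambdaInfty (uX pq.1.1 pq.2.1) (uY pq.1.2 pq.2.2)))
  rintro d ⟨p, hp, q, hq, rfl⟩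
  exact ⟨(p, q), rfl⟩

lemma ghSet_finite {A B : Type*} [Finite A] [Finite B] (uA : A → A → ℝ) (uB : B → B → ℝ) :
    {d : ℝ | ∃ R : Set (A × B), IsCorrespondence R ∧ d = disInfty uA uB R}.Finite := by
  apply Set.Finite.subset (Set.finite_range (fun R : Set (A × B) => disInfty uA uB R))
  rintro d ⟨R, _, rfl⟩
  exact ⟨R, rfl⟩

lemma ghSet_nonempty {A B : Type*} [Nonempty A] [Nonempty B] (uA : A → A → ℝ) (uB : B → B → ℝ) :
    {d : ℝ | ∃ R : Set (A × B), IsCorrespondence R ∧ d = disInfty uA uB R}.Nonempty := by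
  refine ⟨disInfty uA uB Set.univ, Set.univ, ⟨?_, ?_⟩, rfl⟩
  · exact fun x => ⟨Classical.arbitrary B, trivial⟩
  · exact fun y => ⟨Classical.arbitrary A, trivial⟩

/-- `u_GH` satisfies the strong (ultrametric) triangle inequality on finite
ultrametric spaces. -/
theorem uGH_strong_triangle {X Y Z : Type*}
    [Fintype X] [Fintype Y] [Fintype Z] [Nonempty X] [Nonempty Y] [Nonempty Z]
    (uX : X → X → ℝ) (uY : Y → Y → ℝ) (uZ : Z → Z → ℝ)
    (hXsymm : ∀ x y, uX x y = uX y x)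
    (hXzero : ∀ x y, uX x y = 0 ↔ x = y)
    (hXultra : ∀ x y z, uX x z ≤ max (uX x y) (uX y z))
    (hYsymm : ∀ x y, uY x y = uY y x)
    (hYzero : ∀ x y, uY x y = 0 ↔ x = y)
    (hYultra : ∀ x y z, uY x z ≤ max (uY x y) (uY y z))
    (hZsymm : ∀ x y, uZ x y = uZ y x)
    (hZzero : ∀ x y, uZ x y = 0 ↔ x = y)
    (hZultra : ∀ x y z, uZ x z ≤ max (uZ x y) (uZ y z)) :
    uGH uX uZ ≤ max (uGH uX uY) (uGH uY uZ) := by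
  -- nonnegativity of the three "metrics"
  have hXnn : ∀ x y, 0 ≤ uX x y := fun x y => by
    have := hXultra x y x
    rw [hXsymm y x] at this
    have h0 : uX x x = 0 := (hXzero x x).2 rfl
    rw [h0, max_self] at this; linarith
  have hYnn : ∀ x y, 0 ≤ uY x y := fun x y => by
    have := hYultra x y x
    rw [hYsymm y x] at this
    have h0 : uY x x = 0 := (hYzero x x).2 rfl
    rw [h0, max_self] at this; linarith
  have hZnn : ∀ x y, 0 ≤ uZ x y := fun x y => by
    have := hZultra x y x
    rw [hZsymm y x] at this
    have h0 : uZ x x = 0 := (hZzero x x).2 rfl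
    rw [h0, max_self] at this; linarith
  -- extract optimal correspondences
  obtain ⟨R1, hR1corr, hR1⟩ :
      ∃ R : Set (X × Y), IsCorrespondence R ∧ uGH uX uY = disInfty uX uY R := by
    exact (ghSet_nonempty uX uY).csInf_mem (ghSet_finite uX uY)
  obtain ⟨R2, hR2corr, hR2⟩ :
      ∃ R : Set (Y × Z), IsCorrespondence R ∧ uGH uY uZ = disInfty uY uZ R := by
    exact (ghSet_nonempty uY uZ).csInf_mem (ghSet_finite uY uZ)
  -- composed correspondence
  set R : Set (X × Z) := {p | ∃ y, (p.1, y) ∈ R1 ∧ (y, p.2) ∈ R2} with hRdef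
  have hRcorr : IsCorrespondence R := by
    constructor
    · intro x
      obtain ⟨y, hy⟩ := hR1corr.1 x
      obtain ⟨z, hz⟩ := hR2corr.1 y
      exact ⟨z, y, hy, hz⟩
    · intro z
      obtain ⟨y, hy⟩ := hR2corr.2 z
      obtain ⟨x, hx⟩ := hR1corr.2 y
      exact ⟨x, y, hx, hy⟩
  -- uGH ≤ dis of composed correspondence
  have step1 : uGH uX uZ ≤ disInfty uX uZ R :=
    csInf_le ((ghSet_finite uX uZ).bddBelow) ⟨R, hRcorr, rfl⟩
  -- dis of composed correspondence ≤ max of the two dis's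
  have step2 : disInfty uX uZ R ≤ max (disInfty uX uY R1) (disInfty uY uZ R2) := by
    apply csSup_le
    · obtain ⟨x⟩ := (inferInstance : Nonempty X)
      obtain ⟨z, y, hy, hz⟩ := hRcorr.1 x
      exact ⟨_, (x, z), ⟨y, hy, hz⟩, (x, z), ⟨y, hy, hz⟩, rfl⟩
    rintro d ⟨p, ⟨y1, hp1, hp2⟩, q, ⟨y2, hq1, hq2⟩, rfl⟩
    have key := lambdaInfty_ultra (hXnn p.1 q.1) (hYnn y1 y2) (hZnn p.2 q.2)
    refine key.trans (max_le_max ?_ ?_)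
    · apply le_csSup ((disSet_finite uX uY R1).bddAbove)
      exact ⟨(p.1, y1), hp1, (q.1, y2), hq1, rfl⟩
    · apply le_csSup ((disSet_finite uY uZ R2).bddAbove)
      exact ⟨(y1, p.2), hp2, (y2, q.2), hq2, rfl⟩
  rw [hR1, hR2]
  exact step1.trans step2
end

section
/- Let X, Y be finite ultrametric spaces with different diameters. Then u_GH(X,Y) = max(diam(X), diam(Y)), where u_GH is the infimum of dis_∞ over correspondences. -/
/-- Diameter of a finite ultrametric space given by a distance function. -/
noncomputable def uDiam {X : Type*} (uX : X → X → ℝ) : ℝ :=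
  sSup {d : ℝ | ∃ x y : X, d = uX x y}

lemma lambdaInfty_le_s15 {a b c : ℝ} (ha : 0 ≤ a) (h1 : a ≤ c) (h2 : b ≤ c) :
    lambdaInfty a b ≤ c := by
  unfold lambdaInfty
  split
  · linarith
  · exact max_le h1 h2

/-- If two finite ultrametric spaces have different diameters, then
`u_GH(X,Y) = max (diam X) (diam Y)`. -/
theorem uGH_of_diam_ne {X Y : Type*} [Fintype X] [Fintype Y] [Nonempty X] [Nonempty Y]
    (uX : X → X → ℝ) (uY : Y → Y → ℝ)
    (hXsymm : ∀ x y, uX x y = uX y x)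
    (hXzero : ∀ x y, uX x y = 0 ↔ x = y)
    (hXultra : ∀ x y z, uX x z ≤ max (uX x y) (uX y z))
    (hYsymm : ∀ x y, uY x y = uY y x)
    (hYzero : ∀ x y, uY x y = 0 ↔ x = y)
    (hYultra : ∀ x y z, uY x z ≤ max (uY x y) (uY y z))
    (hdiam : uDiam uX ≠ uDiam uY) :
    uGH uX uY = max (uDiam uX) (uDiam uY) := by
  classical
  set M := max (uDiam uX) (uDiam uY) with hM
  -- nonnegativity
  have hXnn : ∀ x y, 0 ≤ uX x y := by
    intro x y
    have h := hXultra x y x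
    rw [(hXzero x x).mpr rfl, hXsymm y x, max_self] at h
    exact h
  have hYnn : ∀ x y, 0 ≤ uY x y := by
    intro x y
    have h := hYultra x y x
    rw [(hYzero x x).mpr rfl, hYsymm y x, max_self] at h
    exact h
  -- diameter sets
  have hSXfin : ({d : ℝ | ∃ x y : X, d = uX x y}).Finite := by
    apply Set.Finite.subset (Set.finite_range (fun p : X × X => uX p.1 p.2))
    rintro d ⟨x, y, rfl⟩
    exact ⟨(x, y), rfl⟩
  have hSYfin : ({d : ℝ | ∃ x y : Y, d = uY x y}).Finite := by
    apply Set.Finite.subset (Set.finite_range (fun p : Y × Y => uY p.1 p.2))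
    rintro d ⟨x, y, rfl⟩
    exact ⟨(x, y), rfl⟩
  obtain ⟨x0⟩ := ‹Nonempty X›
  obtain ⟨y0⟩ := ‹Nonempty Y›
  have hSXne : ({d : ℝ | ∃ x y : X, d = uX x y}).Nonempty := ⟨uX x0 x0, x0, x0, rfl⟩
  have hSYne : ({d : ℝ | ∃ x y : Y, d = uY x y}).Nonempty := ⟨uY y0 y0, y0, y0, rfl⟩
  have hXle : ∀ x y, uX x y ≤ uDiam uX := fun x y =>
    le_csSup hSXfin.bddAbove ⟨x, y, rfl⟩
  have hYle : ∀ x y, uY x y ≤ uDiam uY := fun x y =>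
    le_csSup hSYfin.bddAbove ⟨x, y, rfl⟩
  obtain ⟨xa, xb, hxab⟩ : ∃ x y : X, uDiam uX = uX x y := hSXne.csSup_mem hSXfin
  obtain ⟨ya, yb, hyab⟩ : ∃ x y : Y, uDiam uY = uY x y := hSYne.csSup_mem hSYfin
  -- finiteness of dis sets
  have hDSfin : ∀ R : Set (X × Y),
      ({d : ℝ | ∃ p ∈ R, ∃ q ∈ R, d = lambdaInfty (uX p.1 q.1) (uY p.2 q.2)}).Finite := by
    intro R
    apply Set.Finite.subset (Set.finite_range
      (fun pq : (X × Y) × (X × Y) => lambdaInfty (uX pq.1.1 pq.2.1) (uY pq.1.2 pq.2.2)))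
    rintro d ⟨p, hp, q, hq, rfl⟩
    exact ⟨(p, q), rfl⟩
  -- lower bound for any correspondence
  have hlow : ∀ R : Set (X × Y), IsCorrespondence R → M ≤ disInfty uX uY R := by
    intro R hR
    rcases lt_or_gt_of_ne hdiam with h | h
    · -- diam X < diam Y, M = diam Y = uY ya yb
      obtain ⟨xa', h1⟩ := hR.2 ya
      obtain ⟨xb', h2⟩ := hR.2 yb
      have hlt : uX xa' xb' < uY ya yb := lt_of_le_of_lt (hXle _ _) (hyab ▸ h)
      have hval : lambdaInfty (uX xa' xb') (uY ya yb) = uY ya yb := by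
        unfold lambdaInfty
        rw [if_neg (ne_of_lt hlt), max_eq_right hlt.le]
      have hMem : uY ya yb ∈
          {d : ℝ | ∃ p ∈ R, ∃ q ∈ R, d = lambdaInfty (uX p.1 q.1) (uY p.2 q.2)} :=
        ⟨(xa', ya), h1, (xb', yb), h2, hval.symm⟩
      have : M = uY ya yb := by rw [hM, max_eq_right h.le, hyab]
      rw [this]
      exact le_csSup (hDSfin R).bddAbove hMem
    · -- diam Y < diam X, M = diam X = uX xa xb
      obtain ⟨ya', h1⟩ := hR.1 xa
      obtain ⟨yb', h2⟩ := hR.1 xb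
      have hlt : uY ya' yb' < uX xa xb := lt_of_le_of_lt (hYle _ _) (hxab ▸ h)
      have hval : lambdaInfty (uX xa xb) (uY ya' yb') = uX xa xb := by
        unfold lambdaInfty
        rw [if_neg (ne_of_gt hlt), max_eq_left hlt.le]
      have hMem : uX xa xb ∈
          {d : ℝ | ∃ p ∈ R, ∃ q ∈ R, d = lambdaInfty (uX p.1 q.1) (uY p.2 q.2)} :=
        ⟨(xa, ya'), h1, (xb, yb'), h2, hval.symm⟩
      have : M = uX xa xb := by rw [hM, max_eq_left h.le, hxab]
      rw [this]
      exact le_csSup (hDSfin R).bddAbove hMem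
  -- the full correspondence
  have hfull : IsCorrespondence (Set.univ : Set (X × Y)) :=
    ⟨fun _ => ⟨y0, trivial⟩, fun _ => ⟨x0, trivial⟩⟩
  have hup : disInfty uX uY (Set.univ : Set (X × Y)) ≤ M := by
    apply csSup_le
    · exact ⟨_, (x0, y0), trivial, (x0, y0), trivial, rfl⟩
    · rintro d ⟨p, -, q, -, rfl⟩
      exact lambdaInfty_le_s15 (hXnn _ _) (le_max_of_le_left (hXle _ _))
        (le_max_of_le_right (hYle _ _))
  -- conclude
  have hSne : ({d : ℝ | ∃ R : Set (X × Y), IsCorrespondence R ∧ d = disInfty uX uY R}).Nonempty :=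
    ⟨_, Set.univ, hfull, rfl⟩
  have hSbdd : BddBelow {d : ℝ | ∃ R : Set (X × Y), IsCorrespondence R ∧ d = disInfty uX uY R} :=
    ⟨M, by rintro d ⟨R, hR, rfl⟩; exact hlow R hR⟩
  refine le_antisymm ?_ ?_
  · exact le_trans (csInf_le hSbdd ⟨Set.univ, hfull, rfl⟩) hup
  · exact le_csInf hSne (by rintro d ⟨R, hR, rfl⟩; exact hlow R hR)
end

section
/- Let X be a finite ultrametric space, Y a finite ultrametric space with diam(Y) ≤ ε < diam(X), and suppose sep(X) > ε where sep(X) := min of u_X(x,x') over distinct x,x'. Then any injective map φ : X → Y with dis(φ) ≤ ε (dis(φ) := sup over x,x' of |u_X(x,x') − u_Y(φ(x),φ(x'))|) induces a correspondence R between X and Y with dis(R) ≤ ε. -/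
/-- Separation of a finite ultrametric space: the minimum distance between
distinct points. -/
noncomputable def uSep {X : Type*} (uX : X → X → ℝ) : ℝ :=
  sInf {d : ℝ | ∃ x y : X, x ≠ y ∧ d = uX x y}

/-- If `diam Y ≤ ε < diam X` and `sep X > ε`, any injective map `φ : X → Y` with
`dis(φ) ≤ ε` induces a correspondence `R` with `dis(R) ≤ ε`. -/
theorem corr_of_injection {X Y : Type*} [Fintype X] [Fintype Y] [Nonempty X] [Nonempty Y]
    (uX : X → X → ℝ) (uY : Y → Y → ℝ)
    (hXsymm : ∀ x y, uX x y = uX y x)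
    (hXzero : ∀ x y, uX x y = 0 ↔ x = y)
    (hXultra : ∀ x y z, uX x z ≤ max (uX x y) (uX y z))
    (hYsymm : ∀ x y, uY x y = uY y x)
    (hYzero : ∀ x y, uY x y = 0 ↔ x = y)
    (hYultra : ∀ x y z, uY x z ≤ max (uY x y) (uY y z))
    (ε : ℝ) (hY : uDiam uY ≤ ε) (hX : ε < uDiam uX) (hsep : ε < uSep uX)
    (φ : X → Y) (hinj : Function.Injective φ)
    (hdis : ∀ x x' : X, |uX x x' - uY (φ x) (φ x')| ≤ ε) :
    ∃ R : Set (X × Y),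
      ((∀ x, ∃ y, (x, y) ∈ R) ∧ (∀ y, ∃ x, (x, y) ∈ R)) ∧
      ∀ p ∈ R, ∀ q ∈ R, |uX p.1 q.1 - uY p.2 q.2| ≤ ε := by
  classical
  letI : LinearOrder X := LinearOrder.lift' (Fintype.equivFin X) (Fintype.equivFin X).injective
  -- nonnegativity of uY
  have hY0 : ∀ y y' : Y, 0 ≤ uY y y' := by
    intro y y'
    have h := hYultra y y' y
    rw [(hYzero y y).mpr rfl, hYsymm y' y, max_self] at h
    exact h
  -- every distance in Y is ≤ ε
  have hfinY : ({d : ℝ | ∃ a b : Y, d = uY a b}).Finite := by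
    have : {d : ℝ | ∃ a b : Y, d = uY a b} = Set.range (fun p : Y × Y => uY p.1 p.2) := by
      ext d
      constructor
      · rintro ⟨a, b, rfl⟩; exact ⟨(a, b), rfl⟩
      · rintro ⟨⟨a, b⟩, rfl⟩; exact ⟨a, b, rfl⟩
    rw [this]; exact Set.finite_range _
  have hYle : ∀ y y' : Y, uY y y' ≤ ε := fun y y' =>
    le_trans (le_csSup hfinY.bddAbove ⟨y, y', rfl⟩) hY
  -- every distance in X between distinct points is > ε
  have hfinX : ({d : ℝ | ∃ a b : X, a ≠ b ∧ d = uX a b}).Finite :=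
    (Set.finite_range (fun p : X × X => uX p.1 p.2)).subset
      (by rintro d ⟨a, b, -, rfl⟩; exact ⟨(a, b), rfl⟩)
  have hXgt : ∀ x x' : X, x ≠ x' → ε < uX x x' := fun x x' h =>
    lt_of_lt_of_le hsep (csInf_le hfinX.bddBelow ⟨x, x', h, rfl⟩)
  -- the distortion bound in convenient form
  have hXd : ∀ x x' : X, uX x x' ≤ ε + uY (φ x) (φ x') := by
    intro x x'
    have := (abs_sub_le_iff.mp (hdis x x')).1
    linarith
  -- the canonical nearest-image-point selection σ
  set S : Y → Finset X := fun y =>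
    Finset.univ.filter (fun x => ∀ x', uY (φ x) y ≤ uY (φ x') y) with hS
  have hSne : ∀ y, (S y).Nonempty := by
    intro y
    obtain ⟨x, -, hx⟩ := Finset.exists_min_image Finset.univ (fun x => uY (φ x) y)
      ⟨Classical.arbitrary X, Finset.mem_univ _⟩
    exact ⟨x, by simp only [hS, Finset.mem_filter, Finset.mem_univ, true_and];
                 exact fun x' => hx x' (Finset.mem_univ _)⟩
  set σ : Y → X := fun y => (S y).min' (hSne y) with hσ
  have hσmem : ∀ (y : Y) (x : X), uY (φ (σ y)) y ≤ uY (φ x) y := by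
    intro y x
    exact (Finset.mem_filter.mp ((S y).min'_mem (hSne y))).2 x
  have hσcongr : ∀ y y' : Y, (∀ x, uY (φ x) y = uY (φ x) y') → σ y = σ y' := by
    intro y y' h
    have hSy : S y = S y' := by
      ext x
      simp only [hS, Finset.mem_filter, Finset.mem_univ, true_and]
      constructor
      · intro hx x'; rw [← h x, ← h x']; exact hx x'
      · intro hx x'; rw [h x, h x']; exact hx x'
    have m1 : σ y ∈ S y' := hSy ▸ (S y).min'_mem (hSne y)
    have m2 : σ y' ∈ S y := hSy ▸ (S y').min'_mem (hSne y')
    exact le_antisymm (Finset.min'_le _ _ m2) (Finset.min'_le _ _ m1)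
  have hε0 : 0 ≤ ε :=
    le_trans (hY0 (Classical.arbitrary Y) (Classical.arbitrary Y)) (hYle _ _)
  -- key bound for graph–tail pairs
  have key1 : ∀ (x : X) (y : Y), |uX x (σ y) - uY (φ x) y| ≤ ε := by
    intro x y
    by_cases hx : x = σ y
    · rw [hx, (hXzero (σ y) (σ y)).mpr rfl, zero_sub, abs_neg,
        abs_of_nonneg (hY0 _ _)]
      exact hYle _ _
    · have h1 : ε < uX x (σ y) := hXgt _ _ hx
      have h2 : uY (φ x) (φ (σ y)) ≤ uY (φ x) y := by
        have ht := hYultra (φ x) y (φ (σ y))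
        rw [hYsymm y (φ (σ y))] at ht
        exact le_trans ht (max_le le_rfl (hσmem y x))
      rw [abs_sub_le_iff]
      constructor
      · have := hXd x (σ y); linarith
      · have := hYle (φ x) y; linarith
  -- key bound for tail–tail pairs
  have key2 : ∀ y y' : Y, |uX (σ y) (σ y') - uY y y'| ≤ ε := by
    intro y y'
    by_cases h : σ y = σ y'
    · rw [h, (hXzero (σ y') (σ y')).mpr rfl, zero_sub, abs_neg,
        abs_of_nonneg (hY0 _ _)]
      exact hYle _ _
    · have hD : ε < uX (σ y) (σ y') := hXgt _ _ h
      have main : uY (φ (σ y)) (φ (σ y')) ≤ uY y y' := by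
        by_contra hc
        push_neg at hc
        have step1 : uY y y' < uY (φ (σ y)) y := by
          by_contra hle
          push_neg at hle
          have h1 : uY (φ (σ y)) y' ≤ uY y y' :=
            le_trans (hYultra _ y _) (max_le hle le_rfl)
          have h3 := hYultra (φ (σ y)) y' (φ (σ y'))
          rw [hYsymm y' (φ (σ y'))] at h3
          have h4 : uY (φ (σ y)) (φ (σ y')) ≤ uY (φ (σ y)) y' :=
            le_trans h3 (max_le le_rfl (hσmem y' (σ y)))
          linarith
        have step2 : uY y y' < uY (φ (σ y')) y' := by
          by_contra hle
          push_neg at hle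
          have h1 : uY (φ (σ y')) y ≤ uY y y' := by
            have ht := hYultra (φ (σ y')) y' y
            rw [hYsymm y' y] at ht
            exact le_trans ht (max_le hle le_rfl)
          have h3 := hYultra (φ (σ y)) y (φ (σ y'))
          rw [hYsymm y (φ (σ y'))] at h3
          have h4 : uY (φ (σ y)) (φ (σ y')) ≤ uY y y' :=
            le_trans h3 (max_le (le_trans (hσmem y (σ y')) h1) h1)
          linarith
        have hprof : ∀ x, uY (φ x) y = uY (φ x) y' := by
          intro x
          have hy : uY y y' < uY (φ x) y := lt_of_lt_of_le step1 (hσmem y x)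
          have hy' : uY y y' < uY (φ x) y' := lt_of_lt_of_le step2 (hσmem y' x)
          have ha : uY (φ x) y ≤ uY (φ x) y' := by
            have ht := hYultra (φ x) y' y
            rw [hYsymm y' y] at ht
            exact le_trans ht (max_le le_rfl hy'.le)
          have hb : uY (φ x) y' ≤ uY (φ x) y :=
            le_trans (hYultra (φ x) y y') (max_le le_rfl hy.le)
          exact le_antisymm ha hb
        exact h (hσcongr y y' hprof)
      rw [abs_sub_le_iff]
      constructor
      · have := hXd (σ y) (σ y'); linarith
      · have := hYle y y'; linarith
  -- the correspondence
  refine ⟨{p : X × Y | p.2 = φ p.1 ∨ p.1 = σ p.2}, ⟨?_, ?_⟩, ?_⟩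
  · intro x; exact ⟨φ x, Or.inl rfl⟩
  · intro y; exact ⟨σ y, Or.inr rfl⟩
  · rintro ⟨px, py⟩ (hp | hp) ⟨qx, qy⟩ (hq | hq) <;> dsimp only at *
    · rw [hp, hq]; exact hdis px qx
    · rw [hp, hq]; exact key1 px qy
    · rw [hp, hq, hXsymm, hYsymm]; exact key1 qx py
    · rw [hp, hq]; exact key2 py qy
end
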